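/- Let f : ℝⁿ → ℝⁿ be a continuous mapping and μ ≥ 0. Suppose that for every x ∈ ℝⁿ, f admits a strict μ-estimator h_x at x which is strongly regular around x, and that σ := inf over x ∈ ℝⁿ of lop(h_x, x) satisfies σ > μ. Then f is a bijection of ℝⁿ onto ℝⁿ, and f⁻¹ is Lipschitz continuous on ℝⁿ with constant (σ − μ)⁻¹. -/

import Mathlib

/-!
Fix `μ < c < σ`. Near each point `x`, write `f = h x + (f - h x)`. Linear openness of `h x` at a
rate `α > c` together with the single-valued localization of its inverse makes `h x` metrically
injective at rate `α`, and since `f - h x` is locally `ℓ`-Lipschitz with `ℓ < μ + (α - c)`, a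
contraction argument shows that `f` covers small balls and is metrically injective at rate
`κ = c - μ`.

Globally, minimizing `‖f · - y‖` over a compact set and covering at the minimizer produce, for
every `x₀` and `y`, a preimage of `y` within `‖f x₀ - y‖ / κ` of `x₀`. So `f` is onto and open,
hence a local homeomorphism through which segments lift, and homotopy lifting makes it injective.
Injectivity turns the preimage estimate into `κ`-Lipschitz continuity of `f⁻¹`, and `c ↑ σ` gives
the constant `(σ - μ)⁻¹`.
-/

open Metric Set
open scoped ENNReal NNReal

noncomputable section

variable {E F : Type*} [NormedAddCommGroup E] [NormedAddCommGroup F]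

/-- `f` is `α`-covering at `x`: for every `ε > 0` there is `r ∈ (0, ε]` with
`B̄(f x, α r) ⊆ f (B̄(x, r))`. -/
def AlphaCoveringAt (f : E → F) (x : E) (α : ℝ) : Prop :=
  ∀ ε > (0:ℝ), ∃ r : ℝ, 0 < r ∧ r ≤ ε ∧
    closedBall (f x) (α * r) ⊆ f '' closedBall x r

/-- The covering bound `cov(f, x)`: supremum of all `α > 0` for which `f` is
`α`-covering at `x`. -/
def covBound (f : E → F) (x : E) : ℝ≥0∞ :=
  ⨆ (α : ℝ≥0) (_ : 0 < α ∧ AlphaCoveringAt f x (α : ℝ)), (α : ℝ≥0∞)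

/-- `f` is linearly open around `xb` with constant `α`. -/
def LinOpenWith (f : E → F) (xb : E) (α : ℝ) : Prop :=
  ∃ U ∈ nhds xb, ∃ V ∈ nhds (f xb), ∀ x ∈ U, ∀ r > (0:ℝ),
    ball (f x) (α * r) ∩ V ⊆ f '' ball x r

/-- The exact linear openness bound `lop(f, xb)` (`0` if no constant works). -/
def lopBound (f : E → F) (xb : E) : ℝ≥0∞ :=
  ⨆ (α : ℝ≥0) (_ : 0 < α ∧ LinOpenWith f xb (α : ℝ)), (α : ℝ≥0∞)

/-- `ℓ` is a Lipschitz constant of `h` on some neighbourhood of `xb`. -/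
def IsLipConstAround (h : E → F) (xb : E) (ℓ : ℝ) : Prop :=
  ∃ U ∈ nhds xb, ∀ x₁ ∈ U, ∀ x₂ ∈ U, ‖h x₁ - h x₂‖ ≤ ℓ * ‖x₁ - x₂‖

/-- `lip(h, xb)`: infimum of all `ℓ > 0` which are Lipschitz constants of `h`
on some neighbourhood of `xb` (`∞` if `h` is not locally Lipschitz at `xb`). -/
def lipBound (h : E → F) (xb : E) : ℝ≥0∞ :=
  ⨅ (ℓ : ℝ≥0) (_ : 0 < ℓ ∧ IsLipConstAround h xb (ℓ : ℝ)), (ℓ : ℝ≥0∞)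

/-- `β` is a metric injectivity constant for `g` on some closed ball around `xb`. -/
def IsInjConstAround (g : E → F) (xb : E) (β : ℝ) : Prop :=
  ∃ δ > (0:ℝ), ∀ x₁ ∈ closedBall xb δ, ∀ x₂ ∈ closedBall xb δ,
    β * ‖x₁ - x₂‖ ≤ ‖g x₁ - g x₂‖

/-- `g` is metrically injective around `xb`. -/
def MetricallyInjectiveAround (g : E → F) (xb : E) : Prop :=
  ∃ β > (0:ℝ), IsInjConstAround g xb β

/-- The metric injection bound `inj(g, xb)`: supremum of all valid `β > 0`. -/
def injBound (g : E → F) (xb : E) : ℝ≥0∞ :=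
  ⨆ (β : ℝ≥0) (_ : 0 < β ∧ IsInjConstAround g xb (β : ℝ)), (β : ℝ≥0∞)

/-- `h` is a strict `μ`-estimator of `f` at `xb`: `h xb = f xb` and
`lip(f - h, xb) ≤ μ`. -/
def IsStrictEstimator (f h : E → F) (xb : E) (μ : ℝ≥0) : Prop :=
  h xb = f xb ∧ lipBound (fun x => f x - h x) xb ≤ (μ : ℝ≥0∞)

/-- `g` is strongly (metrically) regular around `xb`: it is linearly open around
`xb` and the set-valued inverse `g⁻¹` has a single-valued graphical localization
around `(g xb, xb)`. -/
def StronglyRegularAround (g : E → F) (xb : E) : Prop :=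
  (∃ α > (0:ℝ), LinOpenWith g xb α) ∧
  ∃ V ∈ nhds (g xb), ∃ U ∈ nhds xb, ∀ y ∈ V, ∃ x : E, g ⁻¹' {y} ∩ U = {x}

open Filter Topology

section Local

variable {f h : E → F} {xb : E}

theorem IsInjConstAround.mono {β β' : ℝ} (hβ : IsInjConstAround h xb β) (hβ' : β' ≤ β) :
    IsInjConstAround h xb β' := by
  obtain ⟨δ, hδ, hinj⟩ := hβ
  exact ⟨δ, hδ, fun x₁ hx₁ x₂ hx₂ =>
    (mul_le_mul_of_nonneg_right hβ' (norm_nonneg _)).trans (hinj x₁ hx₁ x₂ hx₂)⟩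

theorem AlphaCoveringAt.mono {α α' : ℝ} (hα : AlphaCoveringAt h xb α) (hα' : α' ≤ α) :
    AlphaCoveringAt h xb α' := by
  intro ε hε
  obtain ⟨r, hr, hrε, hcov⟩ := hα ε hε
  exact ⟨r, hr, hrε, (closedBall_subset_closedBall (by nlinarith)).trans hcov⟩

theorem IsLipConstAround.exists_lipschitzOnWith {ℓ : ℝ≥0} (hℓ : IsLipConstAround h xb ℓ) :
    ∃ δ > 0, LipschitzOnWith ℓ h (closedBall xb δ) := by
  obtain ⟨U, hU, hlip⟩ := hℓ
  obtain ⟨δ, hδ, hδU⟩ := Metric.mem_nhds_iff.mp hU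
  refine ⟨δ / 2, half_pos hδ, LipschitzOnWith.of_dist_le_mul fun x₁ hx₁ x₂ hx₂ => ?_⟩
  have hsub : closedBall xb (δ / 2) ⊆ U :=
    (closedBall_subset_ball (half_lt_self hδ)).trans hδU
  simpa only [dist_eq_norm] using hlip x₁ (hsub hx₁) x₂ (hsub hx₂)

theorem IsLipConstAround.continuousAt {ℓ : ℝ≥0} (hℓ : IsLipConstAround h xb ℓ) :
    ContinuousAt h xb := by
  obtain ⟨δ, hδ, hlip⟩ := hℓ.exists_lipschitzOnWith
  exact hlip.continuousOn.continuousAt (closedBall_mem_nhds xb hδ)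

/-- If `‖h x₁ - h x₂‖ < α‖x₁ - x₂‖`, openness at `x₁` gives a preimage of `h x₂` closer than
`‖x₁ - x₂‖` to `x₁`, and the single-valued localization forces it to be `x₂`. -/
theorem LinOpenWith.isInjConstAround {α : ℝ} (hlin : LinOpenWith h xb α)
    (hloc : ∃ V ∈ 𝓝 (h xb), ∃ U ∈ 𝓝 xb, ∀ y ∈ V, ∃ x : E, h ⁻¹' {y} ∩ U = {x})
    (hh : ContinuousAt h xb) : IsInjConstAround h xb α := by
  obtain ⟨U, hU, V, hV, hopen⟩ := hlin
  obtain ⟨V', hV', U', hU', hsingle⟩ := hloc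
  have hnhds : U ∩ U' ∩ h ⁻¹' (V ∩ V') ∈ 𝓝 xb :=
    inter_mem (inter_mem hU hU') (hh.preimage_mem_nhds (inter_mem hV hV'))
  obtain ⟨ε, hε, hεsub⟩ := Metric.mem_nhds_iff.mp hnhds
  refine ⟨ε / 3, by positivity, fun x₁ hx₁ x₂ hx₂ => ?_⟩
  have hball : ∀ x, dist x xb < ε → x ∈ U ∩ U' ∩ h ⁻¹' (V ∩ V') := fun x hx => hεsub hx
  have h₁ := hball x₁ (by rw [mem_closedBall] at hx₁; linarith)
  have h₂ := hball x₂ (by rw [mem_closedBall] at hx₂; linarith)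
  by_contra! hlt
  set r := ‖x₁ - x₂‖
  have hr : 0 < r := norm_pos_iff.mpr (sub_ne_zero.mpr fun heq => by simp [r, heq] at hlt)
  obtain ⟨x₃, hx₃, hx₃eq⟩ := hopen x₁ h₁.1.1 r hr
    ⟨by rwa [mem_ball, dist_eq_norm, norm_sub_rev], h₂.2.1⟩
  have hx₃U' : x₃ ∈ U' := (hball x₃ (by
    rw [mem_ball] at hx₃
    rw [mem_closedBall] at hx₁ hx₂
    have : r ≤ dist x₁ xb + dist x₂ xb := by
      simpa only [r, dist_eq_norm] using dist_triangle_right x₁ x₂ xb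
    linarith [dist_triangle x₃ x₁ xb])).1.2
  obtain ⟨x, hx⟩ := hsingle (h x₂) h₂.2.2
  have hsub : (h ⁻¹' {h x₂} ∩ U').Subsingleton := hx ▸ subsingleton_singleton
  rw [hsub ⟨hx₃eq, hx₃U'⟩ ⟨rfl, h₂.1.2⟩, mem_ball, dist_eq_norm, norm_sub_rev] at hx₃
  exact lt_irrefl r hx₃

theorem IsInjConstAround.of_isLipConstAround_sub {α : ℝ} {ℓ : ℝ≥0}
    (hh : IsInjConstAround h xb α) (he : IsLipConstAround (fun x => f x - h x) xb ℓ) :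
    IsInjConstAround f xb (α - ℓ) := by
  obtain ⟨δ₁, hδ₁, hinj⟩ := hh
  obtain ⟨δ₂, hδ₂, hlip⟩ := he.exists_lipschitzOnWith
  refine ⟨min δ₁ δ₂, lt_min hδ₁ hδ₂, fun x₁ hx₁ x₂ hx₂ => ?_⟩
  have hx₁' := closedBall_subset_closedBall (min_le_left δ₁ δ₂) hx₁
  have hx₂' := closedBall_subset_closedBall (min_le_left δ₁ δ₂) hx₂
  have hsplit : h x₁ - h x₂ = (f x₁ - f x₂) - ((f x₁ - h x₁) - (f x₂ - h x₂)) := by abel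
  have hperturb := hlip.dist_le_mul x₁ (closedBall_subset_closedBall (min_le_right δ₁ δ₂) hx₁)
    x₂ (closedBall_subset_closedBall (min_le_right δ₁ δ₂) hx₂)
  rw [dist_eq_norm, dist_eq_norm] at hperturb
  have := hinj x₁ hx₁' x₂ hx₂'
  rw [hsplit] at this
  linarith [norm_sub_le (f x₁ - f x₂) ((f x₁ - h x₁) - (f x₂ - h x₂))]

theorem LinOpenWith.exists_closedBall_subset_image {α : ℝ} (hlin : LinOpenWith h xb α)
    (hα : 0 < α) {δ : ℝ} (hδ : 0 < δ) :
    ∃ r₀ > 0, ∀ r ≤ r₀, closedBall (h xb) (α * r) ⊆ h '' closedBall xb δ := by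
  obtain ⟨U, hU, V, hV, hopen⟩ := hlin
  obtain ⟨ρ, hρ, hρV⟩ := Metric.mem_nhds_iff.mp hV
  refine ⟨min (δ / 2) (ρ / (2 * α)), by positivity, fun r hr y hy => ?_⟩
  have hαr : α * r ≤ α * min (δ / 2) (ρ / (2 * α)) := mul_le_mul_of_nonneg_left hr hα.le
  have hαδ : α * min (δ / 2) (ρ / (2 * α)) < α * δ :=
    mul_lt_mul_of_pos_left ((min_le_left _ _).trans_lt (half_lt_self hδ)) hα
  have hαρ : α * min (δ / 2) (ρ / (2 * α)) < ρ := by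
    calc α * min (δ / 2) (ρ / (2 * α)) ≤ α * (ρ / (2 * α)) :=
          mul_le_mul_of_nonneg_left (min_le_right _ _) hα.le
      _ = ρ / 2 := by field_simp
      _ < ρ := half_lt_self hρ
  rw [mem_closedBall] at hy
  obtain ⟨x, hx, hxy⟩ := hopen xb (mem_of_mem_nhds hU) δ hδ
    ⟨mem_ball.mpr (by linarith), hρV (mem_ball.mpr (by linarith))⟩
  exact ⟨x, ball_subset_closedBall hx, hxy⟩

theorem exists_rightInvOn_of_closedBall_subset_image {α : ℝ≥0} {δ r : ℝ} (hα : 0 < α)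
    (hh : ∀ x₁ ∈ closedBall xb δ, ∀ x₂ ∈ closedBall xb δ, α * ‖x₁ - x₂‖ ≤ ‖h x₁ - h x₂‖)
    (hcov : closedBall (h xb) (α * r) ⊆ h '' closedBall xb δ) (hr : 0 ≤ r) (hrδ : r ≤ δ) :
    ∃ φ : F → E, MapsTo φ (closedBall (h xb) (α * r)) (closedBall xb r) ∧
      RightInvOn φ h (closedBall (h xb) (α * r)) ∧
      LipschitzOnWith α⁻¹ φ (closedBall (h xb) (α * r)) := by
  have hα' : (0 : ℝ) < α := NNReal.coe_pos.mpr hα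
  set φ := Function.invFunOn h (closedBall xb δ)
  have hφ : ∀ y ∈ closedBall (h xb) (α * r), φ y ∈ closedBall xb δ ∧ h (φ y) = y :=
    fun y hy => ⟨Function.invFunOn_mem (hcov hy), Function.invFunOn_eq (hcov hy)⟩
  have hexp : ∀ y₁ ∈ closedBall (h xb) (α * r), ∀ y₂ ∈ closedBall (h xb) (α * r),
      α * dist (φ y₁) (φ y₂) ≤ dist y₁ y₂ := fun y₁ hy₁ y₂ hy₂ => by
    simpa only [dist_eq_norm, (hφ y₁ hy₁).2, (hφ y₂ hy₂).2] using
      hh _ (hφ y₁ hy₁).1 _ (hφ y₂ hy₂).1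
  refine ⟨φ, fun y hy => ?_, fun y hy => (hφ y hy).2, LipschitzOnWith.of_dist_le_mul
    fun y₁ hy₁ y₂ hy₂ => ?_⟩
  · have hxb : h xb ∈ closedBall (h xb) (α * r) := mem_closedBall_self (by positivity)
    have hφxb : φ (h xb) = xb := by
      have := hh _ (hφ _ hxb).1 xb (mem_closedBall_self (hr.trans hrδ))
      rw [(hφ _ hxb).2, sub_self, norm_zero] at this
      exact sub_eq_zero.mp (norm_le_zero_iff.mp (nonpos_of_mul_nonpos_right this hα'))
    have := (hexp y hy _ hxb).trans (mem_closedBall.mp hy)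
    rw [hφxb] at this
    exact mem_closedBall.mpr (le_of_mul_le_mul_left this hα')
  · rw [NNReal.coe_inv, inv_mul_eq_div, le_div_iff₀ hα', mul_comm]
    exact hexp y₁ hy₁ y₂ hy₂

/-- Lyusternik–Graves: with `φ` a right inverse of `h` on the ball, a solution of `f x = y` is a
fixed point of the `ℓ / α`-contraction `x ↦ φ (y - (f x - h x))` of `closedBall xb r`. -/
theorem closedBall_subset_image_of_lipschitzOnWith_sub [CompleteSpace E] {α ℓ : ℝ≥0} {δ r : ℝ}
    (hh : ∀ x₁ ∈ closedBall xb δ, ∀ x₂ ∈ closedBall xb δ, α * ‖x₁ - x₂‖ ≤ ‖h x₁ - h x₂‖)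
    (he : LipschitzOnWith ℓ (fun x => f x - h x) (closedBall xb δ)) (hℓα : ℓ < α)
    (hcov : closedBall (h xb) (α * r) ⊆ h '' closedBall xb δ) (hrδ : r ≤ δ) :
    closedBall (f xb) ((α - ℓ) * r) ⊆ f '' closedBall xb r := by
  intro y hy
  rw [mem_closedBall] at hy
  have hαℓ : (0 : ℝ) < α - ℓ := sub_pos.mpr (NNReal.coe_lt_coe.mpr hℓα)
  have hr : 0 ≤ r := nonneg_of_mul_nonneg_right (dist_nonneg.trans hy) hαℓ
  have hball : closedBall xb r ⊆ closedBall xb δ := closedBall_subset_closedBall hrδ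
  obtain ⟨φ, hφmaps, hφinv, hφlip⟩ :=
    exists_rightInvOn_of_closedBall_subset_image (pos_of_gt hℓα) hh hcov hr hrδ
  set e := fun x => f x - h x
  have harg : MapsTo (fun x => y - e x) (closedBall xb r) (closedBall (h xb) (α * r)) := by
    intro x hx
    have hex := he.dist_le_mul xb (mem_closedBall_self (hr.trans hrδ)) x (hball hx)
    rw [mem_closedBall, dist_comm] at hx
    rw [mem_closedBall, dist_eq_norm,
      show y - e x - h xb = (y - f xb) + (e xb - e x) by simp only [e]; abel]
    calc ‖y - f xb + (e xb - e x)‖ ≤ dist y (f xb) + dist (e xb) (e x) := by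
          simpa only [dist_eq_norm] using norm_add_le (y - f xb) (e xb - e x)
      _ ≤ (α - ℓ) * r + ℓ * r := add_le_add hy (hex.trans (by gcongr))
      _ = α * r := by ring
  have hmaps : MapsTo (fun x => φ (y - e x)) (closedBall xb r) (closedBall xb r) :=
    hφmaps.comp harg
  have hcontr : LipschitzOnWith (α⁻¹ * ℓ) (fun x => φ (y - e x)) (closedBall xb r) := by
    refine hφlip.comp (LipschitzOnWith.of_dist_le_mul fun x₁ hx₁ x₂ hx₂ => ?_) harg
    rw [dist_sub_left]
    exact he.dist_le_mul x₁ (hball hx₁) x₂ (hball hx₂)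
  obtain ⟨x, hx, hfix, -⟩ := ContractingWith.exists_fixedPoint' isClosed_closedBall.isComplete
    hmaps ⟨by rwa [inv_mul_eq_div, div_lt_one (pos_of_gt hℓα)], hcontr.mapsToRestrict hmaps⟩
    (mem_closedBall_self hr) (edist_ne_top _ _)
  refine ⟨x, hx, ?_⟩
  have := hφinv (harg hx)
  rwa [hfix.eq, eq_sub_iff_add_eq, add_sub_cancel] at this

theorem LinOpenWith.alphaCoveringAt_of_isLipConstAround_sub [CompleteSpace E] {α ℓ : ℝ≥0}
    (hlin : LinOpenWith h xb α) (hinj : IsInjConstAround h xb α)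
    (he : IsLipConstAround (fun x => f x - h x) xb ℓ) (hℓα : ℓ < α) :
    AlphaCoveringAt f xb (α - ℓ) := by
  obtain ⟨δ₁, hδ₁, hexp⟩ := hinj
  obtain ⟨δ₂, hδ₂, hlip⟩ := he.exists_lipschitzOnWith
  set δ := min δ₁ δ₂
  have hδ : 0 < δ := lt_min hδ₁ hδ₂
  obtain ⟨r₀, hr₀, hcov⟩ :=
    hlin.exists_closedBall_subset_image (NNReal.coe_pos.mpr (pos_of_gt hℓα)) hδ
  intro ε hε
  refine ⟨min ε (min r₀ δ), lt_min hε (lt_min hr₀ hδ), min_le_left _ _, ?_⟩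
  have hsub : closedBall xb δ ⊆ closedBall xb δ₁ := closedBall_subset_closedBall (min_le_left _ _)
  exact closedBall_subset_image_of_lipschitzOnWith_sub
    (fun x₁ hx₁ x₂ hx₂ => hexp x₁ (hsub hx₁) x₂ (hsub hx₂))
    (hlip.mono (closedBall_subset_closedBall (min_le_right _ _))) hℓα
    (hcov _ ((min_le_right _ _).trans (min_le_left _ _)))
    ((min_le_right _ _).trans (min_le_right _ _))

theorem exists_linOpenWith_of_lt_lopBound {c : ℝ≥0} (hc : (c : ℝ≥0∞) < lopBound h xb) :
    ∃ α : ℝ≥0, c < α ∧ LinOpenWith h xb α := by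
  obtain ⟨α, hα⟩ := lt_iSup_iff.mp hc
  obtain ⟨⟨-, hlin⟩, hcα⟩ := lt_iSup_iff.mp hα
  exact ⟨α, ENNReal.coe_lt_coe.mp hcα, hlin⟩

theorem exists_isLipConstAround_of_lipBound_lt {d : ℝ≥0} (hd : lipBound h xb < d) :
    ∃ ℓ : ℝ≥0, ℓ < d ∧ IsLipConstAround h xb ℓ := by
  obtain ⟨ℓ, hℓ⟩ := iInf_lt_iff.mp hd
  obtain ⟨⟨-, hlip⟩, hℓd⟩ := iInf_lt_iff.mp hℓ
  exact ⟨ℓ, ENNReal.coe_lt_coe.mp hℓd, hlip⟩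

/-- Pick `α > c` with `h` linearly open at rate `α` and `ℓ < μ + (α - c)` a local Lipschitz
constant of `f - h`; then `f` covers and is injective at rate `α - ℓ > c - μ`. -/
theorem IsStrictEstimator.alphaCoveringAt_and_isInjConstAround [CompleteSpace E] {μ c : ℝ≥0}
    (hf : ContinuousAt f xb) (hest : IsStrictEstimator f h xb μ)
    (hreg : StronglyRegularAround h xb) (hμc : μ ≤ c) (hc : (c : ℝ≥0∞) < lopBound h xb) :
    AlphaCoveringAt f xb (c - μ) ∧ IsInjConstAround f xb (c - μ) := by
  obtain ⟨α, hcα, hlin⟩ := exists_linOpenWith_of_lt_lopBound hc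
  obtain ⟨ℓ, hℓ, hlip⟩ := exists_isLipConstAround_of_lipBound_lt (d := μ + (α - c))
    (hest.2.trans_lt (ENNReal.coe_lt_coe.mpr (lt_add_of_pos_right μ (tsub_pos_of_lt hcα))))
  have hℓ' : (ℓ : ℝ) < μ + (α - c) := by
    simpa only [NNReal.coe_add, NNReal.coe_sub hcα.le] using NNReal.coe_lt_coe.mpr hℓ
  have hℓα : ℓ < α := NNReal.coe_lt_coe.mp (by linarith [NNReal.coe_le_coe.mpr hμc])
  have hrate : (c : ℝ) - μ ≤ α - ℓ := by linarith
  have hh : ContinuousAt h xb := by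
    convert hf.sub hlip.continuousAt using 1
    funext x
    simp
  have hinj := hlin.isInjConstAround hreg.2 hh
  exact ⟨(hlin.alphaCoveringAt_of_isLipConstAround_sub hinj hlip hℓα).mono hrate,
    (hinj.of_isLipConstAround_sub hlip).mono hrate⟩

end Local

section Global

variable {f : E → F} {κ : ℝ}

theorem IsInjConstAround.exists_injOn {x : E} (hκ : 0 < κ) (hinj : IsInjConstAround f x κ) :
    ∃ U ∈ 𝓝 x, InjOn f U := by
  obtain ⟨δ, hδ, hexp⟩ := hinj
  refine ⟨closedBall x δ, closedBall_mem_nhds x hδ, fun x₁ hx₁ x₂ hx₂ heq => ?_⟩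
  have := hexp x₁ hx₁ x₂ hx₂
  rw [heq, sub_self, norm_zero] at this
  exact sub_eq_zero.mp (norm_le_zero_iff.mp (nonpos_of_mul_nonpos_right this hκ))

theorem isOpenMap_of_forall_alphaCoveringAt (hκ : 0 < κ) (hcov : ∀ x, AlphaCoveringAt f x κ) :
    IsOpenMap f := by
  refine IsOpenMap.of_nhds_le fun x => le_map fun s hs => ?_
  obtain ⟨ε, hε, hεs⟩ := Metric.nhds_basis_closedBall.mem_iff.mp hs
  obtain ⟨r, hr, hrε, hcovr⟩ := hcov x ε hε
  exact mem_of_superset (closedBall_mem_nhds _ (mul_pos hκ hr))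
    (hcovr.trans (image_mono ((closedBall_subset_closedBall hrε).trans hεs)))

/-- The minimum of `‖f · - y‖` on the compact set where the weighted distance is not worse than
at `x₀` must be `0`: otherwise covering at the minimizer would strictly decrease it. -/
theorem exists_apply_eq_and_mul_dist_le [ProperSpace E] [NormedSpace ℝ F] (hκ : 0 < κ)
    (hf : Continuous f) (hcov : ∀ x, AlphaCoveringAt f x κ) (x₀ : E) (y : F) :
    ∃ x, f x = y ∧ κ * dist x x₀ ≤ dist (f x₀) y := by
  set C := {x | κ * dist x x₀ + dist (f x) y ≤ dist (f x₀) y}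
  have hx₀C : x₀ ∈ C := by simp [C]
  have hCsub : C ⊆ closedBall x₀ (dist (f x₀) y / κ) := fun x hx => by
    rw [mem_closedBall, le_div_iff₀ hκ]
    nlinarith [dist_nonneg (x := f x) (y := y), hx.out]
  have hCcompact : IsCompact C := (isCompact_closedBall _ _).of_isClosed_subset
    (isClosed_le (by fun_prop) continuous_const) hCsub
  obtain ⟨xs, hxsC, hmin⟩ := hCcompact.exists_isMinOn ⟨x₀, hx₀C⟩
    (hf.dist continuous_const : Continuous fun x => dist (f x) y).continuousOn
  have hxsC' : κ * dist xs x₀ + dist (f xs) y ≤ dist (f x₀) y := hxsC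
  refine ⟨xs, ?_, by linarith [dist_nonneg (x := f xs) (y := y)]⟩
  by_contra hne
  set m := dist (f xs) y
  have hm : 0 < m := dist_pos.mpr hne
  obtain ⟨r, hr, hrm, hcovr⟩ := hcov xs (m / κ) (div_pos hm hκ)
  have hκr : κ * r ≤ m := by rwa [le_div_iff₀' hκ] at hrm
  set c := κ * r / m
  have hc₀ : 0 ≤ c := by positivity
  have hc₁ : c ≤ 1 := (div_le_one hm).mpr hκr
  have hmem : AffineMap.lineMap (f xs) y c ∈ closedBall (f xs) (κ * r) := by
    rw [mem_closedBall, dist_lineMap_left, Real.norm_of_nonneg hc₀, div_mul_cancel₀ _ hm.ne']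
  obtain ⟨x', hx', hfx'⟩ := hcovr hmem
  have hfx'y : dist (f x') y = m - κ * r := by
    rw [hfx', dist_lineMap_right, Real.norm_of_nonneg (sub_nonneg.mpr hc₁), sub_mul,
      div_mul_cancel₀ _ hm.ne', one_mul]
  have hx'C : x' ∈ C := by
    rw [mem_closedBall] at hx'
    show κ * dist x' x₀ + dist (f x') y ≤ dist (f x₀) y
    nlinarith [dist_triangle x' xs x₀]
  linarith [mul_pos hκ hr, isMinOn_iff.mp hmin x' hx'C]

theorem IsCompact.exists_forall_isInjConstAround {K : Set E} (hK : IsCompact K)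
    (hinj : ∀ x, IsInjConstAround f x κ) :
    ∃ δ > 0, ∀ z ∈ K, ∀ x₁ ∈ closedBall z δ, ∀ x₂ ∈ closedBall z δ,
      κ * ‖x₁ - x₂‖ ≤ ‖f x₁ - f x₂‖ := by
  choose δ hδ hexp using hinj
  obtain ⟨ε, hε, hball⟩ := lebesgue_number_lemma_of_metric hK
    (c := fun z => ball z (δ z / 2)) (fun _ => isOpen_ball)
    (fun z _ => mem_iUnion.mpr ⟨z, mem_ball_self (half_pos (hδ z))⟩)
  refine ⟨ε / 2, half_pos hε, fun z hz x₁ hx₁ x₂ hx₂ => ?_⟩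
  obtain ⟨w, hw⟩ := hball z hz
  have hsub : closedBall z (ε / 2) ⊆ closedBall w (δ w) :=
    ((closedBall_subset_ball (half_lt_self hε)).trans hw).trans
      ((ball_subset_ball (half_le_self (hδ w).le)).trans ball_subset_closedBall)
  exact hexp w x₁ (hsub hx₁) x₂ (hsub hx₂)

theorem isLocalHomeomorph_of_isOpenMap_of_injOn {X Y : Type*} [TopologicalSpace X]
    [TopologicalSpace Y] {g : X → Y} (hg : Continuous g) (hopen : IsOpenMap g)
    (hinj : ∀ x, ∃ U ∈ 𝓝 x, InjOn g U) : IsLocalHomeomorph g := by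
  refine isLocalHomeomorph_iff_isOpenEmbedding_restrict.mpr fun x => ?_
  obtain ⟨U, hU, hinjU⟩ := hinj x
  refine ⟨interior U, interior_mem_nhds.mpr hU, .of_continuous_injective_isOpenMap
    (hg.comp continuous_subtype_val) ?_ (hopen.comp isOpen_interior.isOpenMap_subtype_val)⟩
  exact fun a b hab => Subtype.ext (hinjU (interior_subset a.2) (interior_subset b.2) hab)

theorem dist_add_smul_add_smul [NormedSpace ℝ F] (a v : F) (s s' : ℝ) :
    dist (a + s • v) (a + s' • v) = |s - s'| * ‖v‖ := by
  rw [dist_eq_norm, add_sub_add_left_eq_sub, ← sub_smul, norm_smul, Real.norm_eq_abs]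

/-- One step of segment lifting: the new piece consists of preimages chosen near the endpoint
`γ t`, and it is continuous because `f` is injective at rate `κ` on the ball where it lies. -/
theorem exists_lift_extension [NormedSpace ℝ F] [ProperSpace E] (hκ : 0 < κ) (hf : Continuous f)
    (hcov : ∀ x, AlphaCoveringAt f x κ) {x₀ : E} {v : F} {γ : ℝ → E} {t t' δ : ℝ}
    (ht : 0 ≤ t) (htt' : t ≤ t') (hδ : ‖v‖ / κ * (t' - t) ≤ δ)
    (hexp : ∀ x₁ ∈ closedBall (γ t) δ, ∀ x₂ ∈ closedBall (γ t) δ, κ * ‖x₁ - x₂‖ ≤ ‖f x₁ - f x₂‖)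
    (hγc : ContinuousOn γ (Icc 0 t))
    (hγ : ∀ s ∈ Icc 0 t, f (γ s) = f x₀ + s • v ∧ dist (γ s) x₀ ≤ ‖v‖ / κ * s) :
    ∃ γ' : ℝ → E, ContinuousOn γ' (Icc 0 t') ∧ γ' 0 = γ 0 ∧
      ∀ s ∈ Icc 0 t', f (γ' s) = f x₀ + s • v ∧ dist (γ' s) x₀ ≤ ‖v‖ / κ * s := by
  set M := ‖v‖ / κ
  obtain ⟨hfz, hzx₀⟩ := hγ t ⟨ht, le_rfl⟩
  choose F hFf hFd using fun s : ℝ =>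
    exists_apply_eq_and_mul_dist_le hκ hf hcov (γ t) (f x₀ + s • v)
  have hFz : ∀ s, dist (F s) (γ t) ≤ M * |s - t| := fun s => by
    have := hFd s
    rw [hfz, dist_add_smul_add_smul, abs_sub_comm] at this
    rw [div_mul_eq_mul_div, le_div_iff₀ hκ]
    linarith
  have hFδ : ∀ s ∈ Icc t t', F s ∈ closedBall (γ t) δ := fun s hs => by
    refine mem_closedBall.mpr ((hFz s).trans (le_trans ?_ hδ))
    rw [abs_of_nonneg (by linarith [hs.1])]
    exact mul_le_mul_of_nonneg_left (by linarith [hs.2]) (by positivity)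
  have hFlip : LipschitzOnWith (Real.toNNReal M) F (Icc t t') := by
    refine LipschitzOnWith.of_dist_le_mul fun s hs s' hs' => ?_
    have := hexp _ (hFδ s hs) _ (hFδ s' hs')
    rw [← dist_eq_norm, ← dist_eq_norm, hFf, hFf, dist_add_smul_add_smul, ← Real.dist_eq] at this
    rw [Real.coe_toNNReal _ (by positivity), div_mul_eq_mul_div, le_div_iff₀ hκ]
    linarith
  have hFt : F t = γ t := dist_le_zero.mp (by simpa using hFz t)
  refine ⟨fun s => if s ≤ t then γ s else F s, ?_, by simp [ht], fun s hs => ?_⟩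
  · rw [← Icc_union_Icc_eq_Icc ht htt']
    refine (hγc.congr fun s hs => if_pos hs.2).union_of_isClosed
      (hFlip.continuousOn.congr fun s hs => ?_) isClosed_Icc isClosed_Icc
    by_cases hst : s ≤ t
    · rw [if_pos hst, le_antisymm hst hs.1, hFt]
    · rw [if_neg hst]
  by_cases hst : s ≤ t
  · simpa only [if_pos hst] using hγ s ⟨hs.1, hst⟩
  · simp only [if_neg hst]
    refine ⟨hFf s, ?_⟩
    have := hFz s
    rw [abs_of_nonneg (by linarith)] at this
    linarith [dist_triangle (F s) (γ t) x₀]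

open unitInterval in
/-- The lift is continued in steps of a fixed length: it stays in a fixed compact ball, on which
`f` is uniformly injective at rate `κ`. -/
theorem exists_lift_segment [NormedSpace ℝ F] [ProperSpace E] (hκ : 0 < κ) (hf : Continuous f)
    (hcov : ∀ x, AlphaCoveringAt f x κ) (hinj : ∀ x, IsInjConstAround f x κ) (x₀ : E) (v : F) :
    ∃ γ : C(I, E), γ 0 = x₀ ∧ ∀ s : I, f (γ s) = f x₀ + (s : ℝ) • v := by
  set M := ‖v‖ / κ
  have hM : 0 ≤ M := by positivity
  obtain ⟨δ, hδ, hexp⟩ := (isCompact_closedBall x₀ M).exists_forall_isInjConstAround hinj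
  set η := δ / (M + 1)
  have hη : 0 < η := by positivity
  let P : ℝ → Prop := fun t => ∃ γ : ℝ → E, ContinuousOn γ (Icc 0 t) ∧ γ 0 = x₀ ∧
    ∀ s ∈ Icc 0 t, f (γ s) = f x₀ + s • v ∧ dist (γ s) x₀ ≤ M * s
  have hstep : ∀ t, 0 ≤ t → t ≤ 1 → P t → P (min 1 (t + η)) := by
    rintro t ht₀ ht₁ ⟨γ, hγc, hγ₀, hγ⟩
    have hγt : γ t ∈ closedBall x₀ M := mem_closedBall.mpr
      ((hγ t ⟨ht₀, le_rfl⟩).2.trans (mul_le_of_le_one_right hM ht₁))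
    have hMη : M * (min 1 (t + η) - t) ≤ δ := calc
      M * (min 1 (t + η) - t) ≤ M * η := by gcongr; linarith [min_le_right 1 (t + η)]
      _ ≤ δ := by rw [mul_div_assoc', div_le_iff₀ (by positivity)]; nlinarith
    obtain ⟨γ', hγ'⟩ := exists_lift_extension hκ hf hcov ht₀ (le_min ht₁ (by linarith)) hMη
      (hexp _ hγt) hγc hγ
    exact ⟨γ', hγ'.1, hγ'.2.1.trans hγ₀, hγ'.2.2⟩
  have hP : ∀ n : ℕ, P (min 1 (n * η)) := by
    intro n
    induction n with
    | zero => exact ⟨fun _ => x₀, continuousOn_const, rfl, fun s hs => by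
        obtain rfl : s = 0 := by simpa using hs
        simp⟩
    | succ n ih =>
      have := hstep _ (le_min zero_le_one (by positivity)) (min_le_left _ _) ih
      rwa [← min_add_add_right, ← min_assoc, min_eq_left (by linarith : (1 : ℝ) ≤ 1 + η),
        ← add_one_mul, ← Nat.cast_succ] at this
  obtain ⟨n, hn⟩ := exists_nat_ge (1 / η)
  obtain ⟨γ, hγc, hγ₀, hγ⟩ : P 1 := by
    simpa only [min_eq_left ((div_le_iff₀ hη).mp hn)] using hP n
  exact ⟨⟨fun s => γ s, continuousOn_iff_continuous_domRestrict.mp hγc⟩, hγ₀,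
    fun s => (hγ s s.2).1⟩

open unitInterval in
/-- If `f a = f b`, lift the segments from `f a` to the images of the points of `[a, b]`. The
lifts depend continuously on the endpoint (homotopy lifting), so their ends trace `[a, b]`; but
the last segment is constant, hence so is its lift, and `b = a`. -/
theorem injective_of_forall_alphaCoveringAt [NormedSpace ℝ E] [NormedSpace ℝ F] [ProperSpace E]
    (hκ : 0 < κ) (hf : Continuous f) (hcov : ∀ x, AlphaCoveringAt f x κ)
    (hinj : ∀ x, IsInjConstAround f x κ) : Function.Injective f := by
  have hlh : IsLocalHomeomorph f := isLocalHomeomorph_of_isOpenMap_of_injOn hf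
    (isOpenMap_of_forall_alphaCoveringAt hκ hcov) fun x => (hinj x).exists_injOn hκ
  have hsep : IsSeparatedMap f := T2Space.isSeparatedMap f
  have hconst : ∀ Γ : C(I, E), (∀ s s', f (Γ s) = f (Γ s')) → Γ 1 = Γ 0 := fun Γ hΓ =>
    hsep.const_of_comp hlh.isLocallyInjective Γ.continuous hΓ 1 0
  intro a b hab
  set c : I → E := fun t => a + (t : ℝ) • (b - a)
  choose Γ hΓ₀ hΓ using fun t : I => exists_lift_segment hκ hf hcov hinj a (f (c t) - f a)
  have hlift : Continuous fun st : I × I => Γ st.2 st.1 :=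
    hlh.continuous_lift hsep ⟨fun st => f a + (st.1 : ℝ) • (f (c st.2) - f a), by fun_prop⟩
      (funext fun st => hΓ _ _) (by simp only [hΓ₀]; exact continuous_const)
      fun t => (Γ t).continuous
  have hends : (fun t => Γ t 1) = c := by
    refine hsep.eq_of_comp_eq hlh.isLocallyInjective
      (hlift.comp (continuous_const.prodMk continuous_id : Continuous fun t : I => ((1 : I), t)))
      (by fun_prop) (funext fun t => by simp [hΓ]) 0 ?_
    rw [hconst _ fun s s' => by simp [hΓ, c], hΓ₀]
    simp [c]
  have := congr_fun hends 1
  rw [hconst _ fun s s' => by simp [hΓ, c, hab], hΓ₀] at this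
  simpa [c] using this

theorem bijective_and_mul_dist_le_of_forall_alphaCoveringAt [NormedSpace ℝ E] [NormedSpace ℝ F]
    [ProperSpace E] (hκ : 0 < κ) (hf : Continuous f) (hcov : ∀ x, AlphaCoveringAt f x κ)
    (hinj : ∀ x, IsInjConstAround f x κ) :
    Function.Bijective f ∧ ∀ x₁ x₂, κ * dist x₁ x₂ ≤ dist (f x₁) (f x₂) := by
  have hinjective := injective_of_forall_alphaCoveringAt hκ hf hcov hinj
  refine ⟨⟨hinjective, fun y => ?_⟩, fun x₁ x₂ => ?_⟩
  · obtain ⟨x, hx, -⟩ := exists_apply_eq_and_mul_dist_le hκ hf hcov 0 y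
    exact ⟨x, hx⟩
  · obtain ⟨x, hx, hdist⟩ := exists_apply_eq_and_mul_dist_le hκ hf hcov x₁ (f x₂)
    rwa [hinjective hx, dist_comm] at hdist

end Global

theorem ENNReal.coe_le_inv_tsub_mul_of_forall_lt {μ : ℝ≥0} {σ : ℝ≥0∞} (hμσ : (μ : ℝ≥0∞) < σ)
    {a b : ℝ≥0} (h : ∀ c : ℝ≥0, μ < c → (c : ℝ≥0∞) < σ → ((c : ℝ) - μ) * a ≤ b) :
    (a : ℝ≥0∞) ≤ (σ - μ)⁻¹ * b := by
  rcases eq_or_ne a 0 with rfl | ha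
  · simp
  rw [mul_comm, ← div_eq_mul_inv, ENNReal.le_div_iff_mul_le (Or.inl (tsub_pos_of_lt hμσ).ne')
    (Or.inr ENNReal.coe_ne_top), mul_comm, ← ENNReal.le_div_iff_mul_le (Or.inl (by simpa))
    (Or.inl ENNReal.coe_ne_top), tsub_le_iff_right]
  refine le_of_forall_lt_imp_le_of_dense fun c hc => ?_
  lift c to ℝ≥0 using (hc.trans_le le_top).ne
  rcases le_or_gt c μ with hcμ | hμc
  · exact le_add_left (ENNReal.coe_le_coe.mpr hcμ)
  rw [← tsub_le_iff_right, ENNReal.le_div_iff_mul_le (Or.inl (by simpa))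
    (Or.inl ENNReal.coe_ne_top), ← ENNReal.coe_sub, ← ENNReal.coe_mul, ENNReal.coe_le_coe,
    ← NNReal.coe_le_coe, NNReal.coe_mul, NNReal.coe_sub hμc.le]
  exact h c hμc hc

/-- Global invertibility via strict estimators (main theorem): if the
continuous map `f` admits at each `x` a strict `μ`-estimator `h x` which is
strongly regular around `x`, and `σ = inf_x lop(h x, x) > μ`, then `f` is a
bijection of `ℝⁿ` whose inverse is Lipschitz with constant `(σ - μ)⁻¹`. -/
theorem stmt8 (n : ℕ) (f : EuclideanSpace ℝ (Fin n) → EuclideanSpace ℝ (Fin n))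
    (μ : ℝ≥0)
    (hcont : Continuous f)
    (h : EuclideanSpace ℝ (Fin n) →
          EuclideanSpace ℝ (Fin n) → EuclideanSpace ℝ (Fin n))
    (hest : ∀ x, IsStrictEstimator f (h x) x μ ∧ StronglyRegularAround (h x) x)
    (hσ : (μ : ℝ≥0∞) < ⨅ x, lopBound (h x) x) :
    Function.Bijective f ∧
    ∃ g : EuclideanSpace ℝ (Fin n) → EuclideanSpace ℝ (Fin n),
      (∀ x, g (f x) = x) ∧ (∀ y, f (g y) = y) ∧
      ∀ y₁ y₂, (‖g y₁ - g y₂‖₊ : ℝ≥0∞) ≤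
        ((⨅ x, lopBound (h x) x) - (μ : ℝ≥0∞))⁻¹ * (‖y₁ - y₂‖₊ : ℝ≥0∞) := by
  have hrate : ∀ c : ℝ≥0, μ < c → (c : ℝ≥0∞) < ⨅ x, lopBound (h x) x →
      Function.Bijective f ∧ ∀ x₁ x₂, ((c : ℝ) - μ) * dist x₁ x₂ ≤ dist (f x₁) (f x₂) := by
    intro c hμc hcσ
    have hloc := fun x => (hest x).1.alphaCoveringAt_and_isInjConstAround hcont.continuousAt
      (hest x).2 hμc.le (hcσ.trans_le (iInf_le _ x))
    exact bijective_and_mul_dist_le_of_forall_alphaCoveringAt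
      (sub_pos.mpr (NNReal.coe_lt_coe.mpr hμc)) hcont (fun x => (hloc x).1) fun x => (hloc x).2
  obtain ⟨c₀, hμc₀, hc₀σ⟩ := ENNReal.lt_iff_exists_nnreal_btwn.mp hσ
  have hbij := (hrate c₀ (ENNReal.coe_lt_coe.mp hμc₀) hc₀σ).1
  refine ⟨hbij, Function.surjInv hbij.2, Function.leftInverse_surjInv hbij,
    Function.rightInverse_surjInv hbij.2, fun y₁ y₂ => ?_⟩
  refine ENNReal.coe_le_inv_tsub_mul_of_forall_lt hσ fun c hμc hcσ => ?_
  have := (hrate c hμc hcσ).2 (Function.surjInv hbij.2 y₁) (Function.surjInv hbij.2 y₂)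
  rwa [Function.surjInv_eq hbij.2, Function.surjInv_eq hbij.2, dist_eq_norm, dist_eq_norm] at this
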